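/- Let m ≥ 2, let Δ be a flag (2m−1)-dimensional pseudomanifold, and let σ be a facet of Δ. Then for every k with 1 < k ≤ 2m−2, a_k = C(2m−2,k) · a_{2m−2} − 4m(2m−2−k) · C(2m−1,k) + Σ_{i=k}^{2m−3} C(i,k) · b_i, where C(a,b) is the binomial coefficient. -/

import Mathlib

open Finset

variable {V : Type*} [DecidableEq V]

/-- A simplicial complex on (a subset of) the vertex type `V`: a collection of
finite sets (the faces) that contains the empty set and is closed under inclusion. -/
def IsComplex (Δ : Finset (Finset V)) : Prop :=
  ∅ ∈ Δ ∧ ∀ σ ∈ Δ, ∀ τ ⊆ σ, τ ∈ Δ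

/-- The vertex set `V(Δ)` of a complex. -/
def verts (Δ : Finset (Finset V)) : Finset V := Δ.sup id

/-- The link `lk(σ,Δ) = {τ ∈ Δ : τ ∩ σ = ∅ ∧ τ ∪ σ ∈ Δ}`. -/
def link (Δ : Finset (Finset V)) (σ : Finset V) : Finset (Finset V) :=
  Δ.filter fun τ => τ ∩ σ = ∅ ∧ τ ∪ σ ∈ Δ

/-- The induced subcomplex `Δ[W] = {σ ∈ Δ : σ ⊆ W}`. -/
def induced (Δ : Finset (Finset V)) (W : Finset V) : Finset (Finset V) :=
  Δ.filter fun σ => σ ⊆ W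

/-- `fNum Δ i` is the number `f_i(Δ)` of `i`-dimensional faces of `Δ`,
i.e. of faces of cardinality `i + 1`. -/
def fNum (Δ : Finset (Finset V)) (i : ℕ) : ℕ :=
  (Δ.filter fun σ => σ.card = i + 1).card

/-- `Δ` is flag: every set of vertices all of whose two-element subsets are
faces of `Δ` is itself a face of `Δ`.  (Taking `u = v` below, this in particular
requires each member of `S` to be a vertex of `Δ`.) -/
def IsFlag (Δ : Finset (Finset V)) : Prop :=
  ∀ S : Finset V, (∀ u ∈ S, ∀ v ∈ S, ({u, v} : Finset V) ∈ Δ) → S ∈ Δ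

/-- A facet: an inclusion-maximal face. -/
def IsFacet (Δ : Finset (Finset V)) (σ : Finset V) : Prop :=
  σ ∈ Δ ∧ ∀ τ ∈ Δ, σ ⊆ τ → τ = σ

/-- A `(d-1)`-dimensional pseudomanifold: a pure `(d-1)`-dimensional complex
(all facets have cardinality `d`) in which every `(d-2)`-dimensional face
(cardinality `d-1`) is contained in exactly two facets (= faces of cardinality `d`). -/
def IsPseudomanifold (Δ : Finset (Finset V)) (d : ℕ) : Prop :=
  IsComplex Δ ∧ (∀ σ, IsFacet Δ σ → σ.card = d) ∧
    ∀ τ ∈ Δ, τ.card = d - 1 → (Δ.filter fun σ => σ.card = d ∧ τ ⊆ σ).card = 2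

/-- The 1-skeleton graph of a complex. -/
def skGraph (Δ : Finset (Finset V)) : SimpleGraph V where
  Adj u v := u ≠ v ∧ ({u, v} : Finset V) ∈ Δ
  symm := ⟨fun u v h => ⟨h.1.symm, by rw [Finset.pair_comm]; exact h.2⟩⟩
  loopless := ⟨fun u h => h.1 rfl⟩

/-- The 1-skeleton graph, restricted to the vertex set of `Δ`, is connected. -/
def ConnOn (Δ : Finset (Finset V)) : Prop :=
  ((skGraph Δ).induce (verts Δ : Set V)).Connected

/-- A normal `(d-1)`-pseudomanifold: the 1-skeleton is connected and the
1-skeleton of the link of each face of dimension at most `d-3`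
(cardinality at most `d-2`) is connected. -/
def IsNormalPseudomanifold (Δ : Finset (Finset V)) (d : ℕ) : Prop :=
  IsPseudomanifold Δ d ∧ ConnOn Δ ∧
    ∀ σ ∈ Δ, σ.card + 2 ≤ d → ConnOn (link Δ σ)

/-- A circle (cycle): a connected 1-dimensional pseudomanifold. -/
def IsCircle (Δ : Finset (Finset V)) : Prop :=
  IsPseudomanifold Δ 2 ∧ ConnOn Δ

/-- The 0-dimensional complex consisting of two disjoint vertices. -/
def IsTwoPoints (P : Finset (Finset V)) : Prop :=
  ∃ a b : V, a ≠ b ∧ P = {∅, {a}, {b}}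

/-- The join of two complexes (on disjoint vertex sets): faces `σ ∪ τ`
with `σ ∈ Δ`, `τ ∈ Γ`. -/
def join (Δ Γ : Finset (Finset V)) : Finset (Finset V) :=
  (Δ ×ˢ Γ).image fun p => p.1 ∪ p.2

/-- `Δ` is the suspension of a circle: the join of a circle with two disjoint points. -/
def IsSuspensionOfCircle (Δ : Finset (Finset V)) : Prop :=
  ∃ C P, IsCircle C ∧ IsTwoPoints P ∧ Disjoint (verts C) (verts P) ∧ Δ = join C P

/-- Iterated join of a family of complexes. -/
def joinFam : (m : ℕ) → (Fin m → Finset (Finset V)) → Finset (Finset V)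
  | 0, _ => {∅}
  | m + 1, C => join (C 0) (joinFam m fun i => C i.succ)

/-- `Δ` is the join of `m` circles (on pairwise disjoint vertex sets). -/
def IsJoinOfCircles (Δ : Finset (Finset V)) (m : ℕ) : Prop :=
  ∃ C : Fin m → Finset (Finset V), (∀ i, IsCircle (C i)) ∧
    (∀ i j, i ≠ j → Disjoint (verts (C i)) (verts (C j))) ∧ Δ = joinFam m C

/-- `a_k = Σ_{τ ⊆ σ, |τ| = k} f₀(lk(τ,Δ))`. -/
def aNum (Δ : Finset (Finset V)) (σ : Finset V) (k : ℕ) : ℕ :=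
  ∑ τ ∈ σ.powersetCard k, fNum (link Δ τ) 0

/-- `W_τ`: the vertices `w` of `lk(τ,Δ)` with `{w,u} ∉ Δ` for every `u ∈ σ \ τ`. -/
def Wset (Δ : Finset (Finset V)) (σ τ : Finset V) : Finset V :=
  (verts (link Δ τ)).filter fun w => ∀ u ∈ σ \ τ, ({w, u} : Finset V) ∉ Δ

/-- `b_k = Σ_{τ ⊆ σ, |τ| = k} |W_τ|`. -/
def bNum (Δ : Finset (Finset V)) (σ : Finset V) (k : ℕ) : ℕ :=
  ∑ τ ∈ σ.powersetCard k, (Wset Δ σ τ).card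

/-- The Euler characteristic `χ(Δ) = Σ_{i ≥ 0} (-1)^i f_i(Δ)`, computed as a sum
of `(-1)^{|σ|-1}` over the nonempty faces `σ`. -/
def eulerChar (Δ : Finset (Finset V)) : ℤ :=
  ∑ σ ∈ Δ.filter (fun σ => σ ≠ ∅), (-1 : ℤ) ^ (σ.card - 1)

/-- `Δ` is Eulerian: for every face `σ` (including `σ = ∅`, whose link is `Δ`),
`χ(lk(σ,Δ)) = 1 + (-1)^{dim lk(σ,Δ)}`; since `dim lk(σ,Δ)` is one less than the
maximal cardinality of a face of the link, this equals `1 - (-1)^{max card}`. -/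
def IsEulerian (Δ : Finset (Finset V)) : Prop :=
  ∀ σ ∈ Δ, eulerChar (link Δ σ) = 1 - (-1) ^ ((link Δ σ).sup Finset.card)

/-!
For a vertex `w` outside the facet `σ`, let `N(w) ⊊ σ` be the set of its neighbours in `σ`
(`neighborsIn Δ σ w`).
Since `Δ` is flag, `w` is a vertex of `lk(τ,Δ)` (for `τ ⊆ σ`) iff `τ ⊆ N(w)`, and `w ∈ W_τ` iff
`τ = N(w)`. Counting pairs `(τ, w)` in two ways gives
`a_k = 2m·C(2m-1,k) + Σ_{i<2m} C(i,k)·b_i`, where `b_i` is the number of `w` with `|N(w)| = i`.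
In a pseudomanifold each ridge `τ ⊆ σ` lies in exactly one other facet `τ ∪ {w}`, which forces
`W_τ = {w}` and hence `b_{2m-1} = 2m`. Eliminating `b_{2m-2}` between `a_k` and `a_{2m-2}` with
`C(2m-2,k)·(2m-1) = C(2m-1,k)·(2m-1-k)` gives the formula.
-/

theorem sum_range_choose_mul_eq_sum_Icc {R : Type*} [NonAssocSemiring R] (f : ℕ → R)
    {N : ℕ} (hN : 0 < N) (k : ℕ) :
    ∑ i ∈ range N, (i.choose k : R) * f i = ∑ i ∈ Icc k (N - 1), (i.choose k : R) * f i := by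
  refine (sum_subset (fun i hi => ?_) fun i hi hik => ?_).symm
  · rw [mem_Icc] at hi
    exact mem_range.2 (by omega)
  · rw [mem_Icc] at hik
    rw [mem_range] at hi
    rw [Nat.choose_eq_zero_of_lt (by omega), Nat.cast_zero, zero_mul]

def neighborsIn (Δ : Finset (Finset V)) (σ : Finset V) (w : V) : Finset V :=
  (σ.erase w).filter fun u => ({w, u} : Finset V) ∈ Δ

section Complex

variable {Δ : Finset (Finset V)}

theorem mem_verts {w : V} : w ∈ verts Δ ↔ ∃ ρ ∈ Δ, w ∈ ρ := by
  simp [verts, mem_sup]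

theorem IsComplex.singleton_mem_iff (hC : IsComplex Δ) {w : V} :
    {w} ∈ Δ ↔ w ∈ verts Δ := by
  refine ⟨fun h => mem_verts.2 ⟨{w}, h, mem_singleton_self w⟩, fun h => ?_⟩
  obtain ⟨ρ, hρ, hw⟩ := mem_verts.1 h
  exact hC.2 ρ hρ {w} (singleton_subset_iff.2 hw)

theorem IsComplex.pair_mem (hC : IsComplex Δ) {ρ : Finset V} (hρ : ρ ∈ Δ) {u v : V}
    (hu : u ∈ ρ) (hv : v ∈ ρ) : ({u, v} : Finset V) ∈ Δ :=
  hC.2 ρ hρ _ (insert_subset hu (singleton_subset_iff.2 hv))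

theorem IsComplex.link (hC : IsComplex Δ) {τ : Finset V} (hτ : τ ∈ Δ) :
    IsComplex (link Δ τ) := by
  refine ⟨mem_filter.2 ⟨hC.1, empty_inter τ, by rwa [empty_union]⟩, fun ρ hρ ρ' hρ' => ?_⟩
  obtain ⟨hρΔ, hdisj, hun⟩ := mem_filter.1 hρ
  refine mem_filter.2 ⟨hC.2 ρ hρΔ ρ' hρ', ?_, hC.2 _ hun _ (union_subset_union hρ' subset_rfl)⟩
  exact subset_empty.1 (hdisj ▸ inter_subset_inter_right hρ')

theorem IsComplex.fNum_zero (hC : IsComplex Δ) : fNum Δ 0 = (verts Δ).card := by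
  have himage : Δ.filter (fun ρ => ρ.card = 0 + 1) = (verts Δ).image singleton := by
    ext ρ
    simp only [mem_filter, mem_image, zero_add, card_eq_one]
    constructor
    · rintro ⟨hρ, w, rfl⟩
      exact ⟨w, hC.singleton_mem_iff.1 hρ, rfl⟩
    · rintro ⟨w, hw, rfl⟩
      exact ⟨hC.singleton_mem_iff.2 hw, w, rfl⟩
  rw [fNum, himage, card_image_of_injective _ singleton_injective]

theorem IsFlag.insert_mem (hC : IsComplex Δ) (hF : IsFlag Δ) {τ : Finset V} (hτ : τ ∈ Δ)
    {w : V} (hw : w ∈ verts Δ) (hadj : ∀ u ∈ τ, ({w, u} : Finset V) ∈ Δ) :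
    insert w τ ∈ Δ := by
  refine hF _ fun u hu v hv => ?_
  rcases mem_insert.1 hu with rfl | huτ <;> rcases mem_insert.1 hv with rfl | hvτ
  · simpa using hC.singleton_mem_iff.2 hw
  · exact hadj _ hvτ
  · rw [pair_comm]; exact hadj _ huτ
  · exact hC.pair_mem hτ huτ hvτ

theorem IsFlag.mem_verts_link (hC : IsComplex Δ) (hF : IsFlag Δ) {τ : Finset V}
    (hτ : τ ∈ Δ) {w : V} :
    w ∈ verts (link Δ τ) ↔ w ∈ verts Δ ∧ w ∉ τ ∧ ∀ u ∈ τ, ({w, u} : Finset V) ∈ Δ := by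
  constructor
  · intro h
    obtain ⟨ρ, hρ, hwρ⟩ := mem_verts.1 h
    obtain ⟨hρΔ, hdisj, hun⟩ := mem_filter.1 hρ
    refine ⟨mem_verts.2 ⟨ρ, hρΔ, hwρ⟩, fun hwτ => ?_, fun u hu =>
      hC.pair_mem hun (mem_union_left τ hwρ) (mem_union_right ρ hu)⟩
    simpa [hdisj] using mem_inter.2 ⟨hwρ, hwτ⟩
  · rintro ⟨hw, hwτ, hadj⟩
    refine mem_verts.2 ⟨{w}, mem_filter.2 ⟨hC.singleton_mem_iff.2 hw,
      singleton_inter_of_notMem hwτ, ?_⟩, mem_singleton_self w⟩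
    rw [← insert_eq]
    exact hF.insert_mem hC hτ hw hadj

end Complex

section Neighbors

variable {Δ : Finset (Finset V)} {σ : Finset V}

theorem neighborsIn_subset (w : V) : neighborsIn Δ σ w ⊆ σ :=
  (filter_subset _ _).trans (erase_subset w σ)

theorem IsFlag.mem_verts_link_iff_subset_neighborsIn (hC : IsComplex Δ) (hF : IsFlag Δ)
    (hσ : σ ∈ Δ) {τ : Finset V} (hτ : τ ⊆ σ) {w : V} :
    w ∈ verts (link Δ τ) ↔ w ∈ verts Δ ∧ τ ⊆ neighborsIn Δ σ w := by
  rw [hF.mem_verts_link hC (hC.2 σ hσ τ hτ)]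
  simp only [neighborsIn, subset_iff, mem_filter, mem_erase]
  constructor
  · rintro ⟨hw, hwτ, hadj⟩
    exact ⟨hw, fun u hu => ⟨⟨fun huw => hwτ (huw ▸ hu), hτ hu⟩, hadj u hu⟩⟩
  · rintro ⟨hw, hsub⟩
    exact ⟨hw, fun hwτ => (hsub hwτ).1.1 rfl, fun u hu => (hsub hu).2⟩

theorem IsFlag.mem_Wset_iff (hC : IsComplex Δ) (hF : IsFlag Δ) (hσ : σ ∈ Δ)
    {τ : Finset V} (hτ : τ ⊆ σ) {w : V} :
    w ∈ Wset Δ σ τ ↔ w ∈ verts Δ \ σ ∧ neighborsIn Δ σ w = τ := by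
  rw [Wset, mem_filter, hF.mem_verts_link_iff_subset_neighborsIn hC hσ hτ, mem_sdiff]
  constructor
  · rintro ⟨⟨hw, hsub⟩, hnon⟩
    have hwσ : w ∉ σ := fun hwσ => by
      have hwτ : w ∉ τ := fun hwτ => (mem_erase.1 (mem_filter.1 (hsub hwτ)).1).1 rfl
      simpa [hC.singleton_mem_iff.2 hw] using hnon w (mem_sdiff.2 ⟨hwσ, hwτ⟩)
    refine ⟨⟨hw, hwσ⟩, (hsub.antisymm fun u hu => ?_).symm⟩
    obtain ⟨⟨-, huσ⟩, hadj⟩ := by simpa only [neighborsIn, mem_filter, mem_erase] using hu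
    by_contra huτ
    exact hnon u (mem_sdiff.2 ⟨huσ, huτ⟩) hadj
  · rintro ⟨⟨hw, hwσ⟩, rfl⟩
    refine ⟨⟨hw, subset_rfl⟩, fun u hu hadj => (mem_sdiff.1 hu).2 ?_⟩
    have huw : u ≠ w := fun h => hwσ (h ▸ (mem_sdiff.1 hu).1)
    exact mem_filter.2 ⟨mem_erase.2 ⟨huw, (mem_sdiff.1 hu).1⟩, hadj⟩

theorem IsFlag.neighborsIn_ssubset (hC : IsComplex Δ) (hF : IsFlag Δ) (hσ : IsFacet Δ σ)
    {w : V} (hw : w ∈ verts Δ \ σ) : neighborsIn Δ σ w ⊂ σ := by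
  refine (neighborsIn_subset w).ssubset_of_not_subset fun hsub => (mem_sdiff.1 hw).2 ?_
  have hins : insert w σ ∈ Δ :=
    hF.insert_mem hC hσ.1 (mem_sdiff.1 hw).1 fun u hu => (mem_filter.1 (hsub hu)).2
  exact hσ.2 _ hins (subset_insert w σ) ▸ mem_insert_self w σ

theorem IsComplex.neighborsIn_of_mem (hC : IsComplex Δ) (hσ : σ ∈ Δ) {w : V} (hw : w ∈ σ) :
    neighborsIn Δ σ w = σ.erase w :=
  filter_true_of_mem fun _ hu => hC.pair_mem hσ hw (mem_of_mem_erase hu)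

theorem IsFlag.aNum_eq_sum_choose (hC : IsComplex Δ) (hF : IsFlag Δ) (hσ : σ ∈ Δ) (k : ℕ) :
    aNum Δ σ k = ∑ w ∈ verts Δ, (neighborsIn Δ σ w).card.choose k := by
  have hverts : ∀ τ ∈ σ.powersetCard k,
      fNum (link Δ τ) 0 = ((verts Δ).filter fun w => τ ⊆ neighborsIn Δ σ w).card := by
    intro τ hτ
    have hτσ := (mem_powersetCard.1 hτ).1
    rw [(hC.link (hC.2 σ hσ τ hτσ)).fNum_zero]
    congr 1
    ext w
    rw [mem_filter, hF.mem_verts_link_iff_subset_neighborsIn hC hσ hτσ]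
  have hfiber : ∀ w, (σ.powersetCard k).filter (fun τ => τ ⊆ neighborsIn Δ σ w)
      = (neighborsIn Δ σ w).powersetCard k := by
    intro w
    ext τ
    simp only [mem_filter, mem_powersetCard]
    exact ⟨fun ⟨⟨_, h⟩, hs⟩ => ⟨hs, h⟩,
      fun ⟨hs, h⟩ => ⟨⟨hs.trans (neighborsIn_subset w), h⟩, hs⟩⟩
  rw [aNum, sum_congr rfl hverts]
  calc _ = ∑ w ∈ verts Δ, ((σ.powersetCard k).filter (· ⊆ neighborsIn Δ σ w)).card :=
        sum_card_bipartiteAbove_eq_sum_card_bipartiteBelow (fun τ w => τ ⊆ neighborsIn Δ σ w)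
    _ = _ := by simp only [hfiber, card_powersetCard]

theorem IsFlag.bNum_eq_card (hC : IsComplex Δ) (hF : IsFlag Δ) (hσ : σ ∈ Δ) (i : ℕ) :
    bNum Δ σ i = ((verts Δ \ σ).filter fun w => (neighborsIn Δ σ w).card = i).card := by
  have hmaps : Set.MapsTo (neighborsIn Δ σ)
      ((verts Δ \ σ).filter fun w => (neighborsIn Δ σ w).card = i) (σ.powersetCard i) :=
    fun w hw => mem_powersetCard.2 ⟨neighborsIn_subset w, (mem_filter.1 hw).2⟩
  rw [card_eq_sum_card_fiberwise hmaps, bNum]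
  refine sum_congr rfl fun τ hτ => congr_arg card ?_
  ext w
  rw [hF.mem_Wset_iff hC hσ (mem_powersetCard.1 hτ).1, mem_filter, mem_filter]
  constructor
  · rintro ⟨hw, rfl⟩
    exact ⟨⟨hw, (mem_powersetCard.1 hτ).2⟩, rfl⟩
  · rintro ⟨⟨hw, -⟩, h⟩
    exact ⟨hw, h⟩

theorem IsFlag.aNum_eq (hC : IsComplex Δ) (hF : IsFlag Δ) (hσ : IsFacet Δ σ) (k : ℕ) :
    aNum Δ σ k = σ.card * (σ.card - 1).choose k
      + ∑ i ∈ range σ.card, i.choose k * bNum Δ σ i := by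
  have hσV : σ ⊆ verts Δ := fun w hw => mem_verts.2 ⟨σ, hσ.1, hw⟩
  have hmaps : ∀ w ∈ verts Δ \ σ, (neighborsIn Δ σ w).card ∈ range σ.card :=
    fun w hw => mem_range.2 (card_lt_card (hF.neighborsIn_ssubset hC hσ hw))
  rw [hF.aNum_eq_sum_choose hC hσ.1, ← sum_sdiff hσV, add_comm,
    ← sum_fiberwise_of_maps_to hmaps]
  congr 1
  · rw [← smul_eq_mul, ← sum_const]
    refine sum_congr rfl fun w hw => ?_
    rw [hC.neighborsIn_of_mem hσ.1 hw, card_erase_of_mem hw]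
  · refine sum_congr rfl fun i _ => ?_
    rw [hF.bNum_eq_card hC hσ.1, sum_congr rfl fun w hw => by rw [(mem_filter.1 hw).2],
      sum_const, smul_eq_mul, mul_comm]

end Neighbors

section Pseudomanifold

variable {Δ : Finset (Finset V)} {σ : Finset V} {d : ℕ}

theorem IsFlag.card_Wset_eq_one (hF : IsFlag Δ) (hP : IsPseudomanifold Δ d) (hd : 0 < d)
    (hσ : IsFacet Δ σ) {τ : Finset V} (hτσ : τ ⊆ σ) (hτ : τ.card = d - 1) :
    (Wset Δ σ τ).card = 1 := by
  obtain ⟨hC, hpure, hthin⟩ := hP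
  have hσd := hpure σ hσ
  have hτΔ := hC.2 σ hσ.1 τ hτσ
  have hσS : σ ∈ Δ.filter fun ρ => ρ.card = d ∧ τ ⊆ ρ := mem_filter.2 ⟨hσ.1, hσd, hτσ⟩
  suffices (Wset Δ σ τ).card = ((Δ.filter fun ρ => ρ.card = d ∧ τ ⊆ ρ).erase σ).card by
    rw [this, card_erase_of_mem hσS, hthin τ hτΔ hτ]
  -- the facets other than `σ` through the ridge `τ` are the `insert w τ` with `w ∈ W_τ`
  refine card_nbij (insert · τ) (fun w hw => ?_) (fun w hw w' _ h => ?_) (fun ρ hρ => ?_)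
  · obtain ⟨hw, hN⟩ := (hF.mem_Wset_iff hC hσ.1 hτσ).1 hw
    have hwτ : w ∉ τ := fun h => (mem_sdiff.1 hw).2 (hτσ h)
    refine mem_erase.2 ⟨fun h => (mem_sdiff.1 hw).2 (h ▸ mem_insert_self w τ), mem_filter.2
      ⟨hF.insert_mem hC hτΔ (mem_sdiff.1 hw).1 fun u hu => ?_, ?_, subset_insert w τ⟩⟩
    · rw [← hN] at hu
      exact (mem_filter.1 hu).2
    · rw [card_insert_of_notMem hwτ]
      omega
  · obtain ⟨hw, -⟩ := (hF.mem_Wset_iff hC hσ.1 hτσ).1 hw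
    exact (insert_inj fun h => (mem_sdiff.1 hw).2 (hτσ h)).1 h
  · obtain ⟨hρσ, hρ⟩ := mem_erase.1 hρ
    obtain ⟨hρΔ, hρd, hτρ⟩ := mem_filter.1 hρ
    obtain ⟨w, hw⟩ := card_eq_one.1 (by rw [card_sdiff_of_subset hτρ]; omega : (ρ \ τ).card = 1)
    obtain ⟨hwρ, hwτ⟩ := mem_sdiff.1 (hw ▸ mem_singleton_self w)
    have hρeq : insert w τ = ρ := by rw [insert_eq, ← hw, sdiff_union_of_subset hτρ]
    have hwσ : w ∉ σ := fun hwσ => hρσ <| hρeq ▸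
      eq_of_subset_of_card_le (insert_subset hwσ hτσ) (by rw [hρeq, hσd, hρd])
    have hwV : w ∈ verts Δ \ σ := mem_sdiff.2 ⟨mem_verts.2 ⟨ρ, hρΔ, hwρ⟩, hwσ⟩
    have hτN : τ ⊆ neighborsIn Δ σ w := fun u hu => mem_filter.2
      ⟨mem_erase.2 ⟨fun h => hwτ (h ▸ hu), hτσ hu⟩, hC.pair_mem hρΔ hwρ (hτρ hu)⟩
    have hN : neighborsIn Δ σ w = τ := (eq_of_subset_of_card_le hτN (by
      have := card_lt_card (hF.neighborsIn_ssubset hC hσ hwV)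
      omega)).symm
    exact ⟨w, (hF.mem_Wset_iff hC hσ.1 hτσ).2 ⟨hwV, hN⟩, hρeq⟩

theorem IsFlag.bNum_sub_one (hF : IsFlag Δ) (hP : IsPseudomanifold Δ d) (hd : 0 < d)
    (hσ : IsFacet Δ σ) : bNum Δ σ (d - 1) = d := by
  rw [bNum, sum_congr rfl fun τ hτ => hF.card_Wset_eq_one hP hd hσ
      (mem_powersetCard.1 hτ).1 (mem_powersetCard.1 hτ).2,
    sum_const, smul_eq_mul, mul_one, card_powersetCard, hP.2.1 σ hσ,
    Nat.choose_symm hd, Nat.choose_one_right]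

theorem IsFlag.aNum_eq_choose_mul_aNum {n k : ℕ} (hF : IsFlag Δ)
    (hP : IsPseudomanifold Δ (n + 2)) (hσ : IsFacet Δ σ) (hk : k ≤ n) :
    (aNum Δ σ k : ℤ) = n.choose k * aNum Δ σ n - 2 * (n + 2) * (n - k) * (n + 1).choose k
      + ∑ i ∈ range n, (i.choose k : ℤ) * bNum Δ σ i := by
  have hb : bNum Δ σ (n + 1) = n + 2 := hF.bNum_sub_one hP (Nat.succ_pos _) hσ
  have ha (j : ℕ) : (aNum Δ σ j : ℤ) = (n + 2) * (n + 1).choose j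
      + ∑ i ∈ range n, (i.choose j : ℤ) * bNum Δ σ i
      + n.choose j * bNum Δ σ n + (n + 1).choose j * (n + 2) := by
    rw [hF.aNum_eq hP.1 hσ, hP.2.1 σ hσ, sum_range_succ, sum_range_succ, hb]
    push_cast
    ring
  have hzero : ∑ i ∈ range n, (i.choose n : ℤ) * bNum Δ σ i = 0 :=
    sum_eq_zero fun i hi => by simp [Nat.choose_eq_zero_of_lt (mem_range.1 hi)]
  have hpascal := Nat.choose_mul_succ_eq n k
  zify [(by omega : k ≤ n + 1)] at hpascal
  rw [ha k, ha n, hzero, Nat.choose_self, Nat.choose_succ_self_right]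
  push_cast
  linear_combination (-2 * (n + 2) : ℤ) * hpascal

end Pseudomanifold

theorem a_k_formula_general (m : ℕ) (hm : 2 ≤ m) (Δ : Finset (Finset V))
    (hF : IsFlag Δ) (hP : IsPseudomanifold Δ (2 * m)) (σ : Finset V)
    (hσ : IsFacet Δ σ) (k : ℕ) (hk2 : k ≤ 2 * m - 2) :
    (aNum Δ σ k : ℤ) =
      ((2 * m - 2).choose k) * aNum Δ σ (2 * m - 2)
        - 4 * m * (2 * m - 2 - k) * ((2 * m - 1).choose k)
        + ∑ i ∈ Finset.Icc k (2 * m - 3), (i.choose k : ℤ) * bNum Δ σ i := by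
  have hP' : IsPseudomanifold Δ (2 * m - 2 + 2) := by rwa [Nat.sub_add_cancel (by omega)]
  have h := hF.aNum_eq_choose_mul_aNum hP' hσ hk2
  rw [sum_range_choose_mul_eq_sum_Icc _ (by omega), show 2 * m - 2 - 1 = 2 * m - 3 by omega] at h
  rw [h]
  push_cast [Nat.cast_sub (by omega : 2 ≤ 2 * m), show 2 * m - 2 + 1 = 2 * m - 1 by omega]
  ring

/-- Let `m ≥ 2`, let `Δ` be a flag `(2m-1)`-dimensional
pseudomanifold and `σ` a facet.  For every `1 < k ≤ 2m - 2`: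
`a_k = C(2m-2,k)·a_{2m-2} - 4m(2m-2-k)·C(2m-1,k) + Σ_{i=k}^{2m-3} C(i,k)·b_i`. -/
theorem a_k_formula (m : ℕ) (hm : 2 ≤ m) (Δ : Finset (Finset V))
    (hF : IsFlag Δ) (hP : IsPseudomanifold Δ (2 * m)) (σ : Finset V)
    (hσ : IsFacet Δ σ) (k : ℕ) (hk1 : 1 < k) (hk2 : k ≤ 2 * m - 2) :
    (aNum Δ σ k : ℤ) =
      ((2 * m - 2).choose k) * aNum Δ σ (2 * m - 2)
        - 4 * m * (2 * m - 2 - k) * ((2 * m - 1).choose k)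
        + ∑ i ∈ Finset.Icc k (2 * m - 3), (i.choose k : ℤ) * bNum Δ σ i :=
  a_k_formula_general m hm Δ hF hP σ hσ k hk2
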